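/- arXiv:1809.08594 — 2 statements merged into one kernel-verified Lean document; each statement's English description precedes it below -/
import Mathlib

section
/- The Wang–Hou conjecture on signed graphs is false. That is, there exist a natural number n, an index k with 1 ≤ k ≤ n, and a real symmetric n×n matrix M (the Laplacian of a signed graph) satisfying: M_{ij} ∈ {−1, 0, 1} for all i ≠ j, and M_{ii} equals the number of indices j ≠ i with M_{ij} ≠ 0, such that the sum of the k largest eigenvalues of M (counted with multiplicity) strictly exceeds e + (k+1 choose 2) + 1, where e is half the number of nonzero off-diagonal entries of M (the number of edges of the underlying graph). -/
/-!
The counterexample is `K₉` with three vertex-disjoint positive triangles and all other edges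
negative. Its Laplacian is `9 I + J - 2 P`, with `J` the all-ones matrix and `P` the block matrix
of the triangles, so `(L - 3)(L - 9)(L - 12) = 0` and `tr L = 72`. Hence every eigenvalue lies in
`{3, 9, 12}`, and the `k` eigenvalues different from `3` satisfy `k ≤ 7` and sum to
`72 - 3 (9 - k) = 45 + 3k`, which exceeds `e + (k+1 choose 2) + 1 = 37 + k(k+1)/2`.
-/

open Matrix Polynomial

theorem spectrum.isRoot_of_aeval_eq_zero {𝕜 A : Type*} [Field 𝕜] [Ring A] [Algebra 𝕜 A]
    [Nontrivial A] {a : A} {p : 𝕜[X]} (hp : aeval a p = 0) {μ : 𝕜} (hμ : μ ∈ spectrum 𝕜 a) :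
    p.IsRoot μ := by
  have := spectrum.subset_polynomial_aeval a p ⟨μ, hμ, rfl⟩
  rwa [hp, spectrum.zero_eq, Set.mem_singleton_iff] at this

theorem Matrix.IsHermitian.isRoot_eigenvalues_of_aeval_eq_zero {𝕜 n : Type*} [RCLike 𝕜]
    [Fintype n] [DecidableEq n] {A : Matrix n n 𝕜} (hA : A.IsHermitian) {p : ℝ[X]}
    (hp : aeval A p = 0) (i : n) : p.IsRoot (hA.eigenvalues i) :=
  have : Nonempty n := ⟨i⟩
  spectrum.isRoot_of_aeval_eq_zero hp (hA.eigenvalues_mem_spectrum_real i)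

namespace Matrix

variable {n α : Type*} [Fintype n] [DecidableEq n] [Zero α] {M : Matrix n n α}

theorem natCard_ne_zero_offDiag_row (hM : ∀ i j, i ≠ j → M i j ≠ 0) (i : n) :
    Nat.card {j : n // j ≠ i ∧ M i j ≠ 0} = Fintype.card n - 1 := by
  rw [Nat.card_congr (Equiv.subtypeEquivRight fun j => and_iff_left_of_imp (hM i j ∘ Ne.symm)),
    Nat.card_eq_fintype_card, Fintype.card_subtype_compl, Fintype.card_subtype_eq]

theorem natCard_ne_zero_offDiag (hM : ∀ i j, i ≠ j → M i j ≠ 0) :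
    Nat.card {p : n × n // p.1 ≠ p.2 ∧ M p.1 p.2 ≠ 0} = Fintype.card n * (Fintype.card n - 1) := by
  have hoff : Finset.univ.filter (fun p : n × n => p.1 ≠ p.2) = Finset.univ.offDiag := by
    ext; simp
  rw [Nat.card_congr (Equiv.subtypeEquivRight fun p : n × n => and_iff_left_of_imp (hM p.1 p.2)),
    Nat.card_eq_fintype_card, Fintype.card_subtype, hoff, Finset.offDiag_card, Finset.card_univ,
    Nat.mul_sub_one]

end Matrix

/-- Vertex `i` lies in the triangle `i / 3`; the entries off the diagonal are `-σ(ij)`. The ring is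
a parameter so that the cubic relation can be checked over `ℤ` by `decide`. -/
def triangleSignedLaplacian (R : Type*) [Ring R] : Matrix (Fin 9) (Fin 9) R :=
  of fun i j => if i = j then 8 else if i.val / 3 = j.val / 3 then -1 else 1

namespace triangleSignedLaplacian

theorem apply_self {R : Type*} [Ring R] (i : Fin 9) : triangleSignedLaplacian R i i = 8 := by
  simp [triangleSignedLaplacian]

theorem apply_of_ne {R : Type*} [Ring R] {i j : Fin 9} (h : i ≠ j) :
    triangleSignedLaplacian R i j = -1 ∨ triangleSignedLaplacian R i j = 1 := by
  simp only [triangleSignedLaplacian, of_apply, if_neg h]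
  split_ifs <;> simp

theorem apply_ne_zero_of_ne {R : Type*} [Ring R] [Nontrivial R] {i j : Fin 9} (h : i ≠ j) :
    triangleSignedLaplacian R i j ≠ 0 := by
  rcases apply_of_ne (R := R) h with h | h <;> simp [h]

theorem isHermitian : (triangleSignedLaplacian ℝ).IsHermitian := by
  ext i j
  simp only [conjTranspose_apply, star_trivial, triangleSignedLaplacian, of_apply, eq_comm]

theorem cubic_eq_zero :
    (triangleSignedLaplacian ℤ - 3) * (triangleSignedLaplacian ℤ - 9) *
      (triangleSignedLaplacian ℤ - 12) = 0 := by
  decide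

theorem castRingHom_mapMatrix (R : Type*) [Ring R] :
    (Int.castRingHom R).mapMatrix (triangleSignedLaplacian ℤ) = triangleSignedLaplacian R := by
  ext i j
  simp only [RingHom.mapMatrix_apply, map_apply, triangleSignedLaplacian, of_apply]
  split_ifs <;> simp

theorem aeval_eq_zero :
    aeval (triangleSignedLaplacian ℝ) ((X - C 3) * (X - C 9) * (X - C 12) : ℝ[X]) = 0 := by
  simpa only [map_mul, map_sub, map_ofNat, castRingHom_mapMatrix, map_zero, aeval_X, aeval_C]
    using congrArg (Int.castRingHom ℝ).mapMatrix cubic_eq_zero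

theorem eigenvalues_eq (i : Fin 9) :
    isHermitian.eigenvalues i = 3 ∨ isHermitian.eigenvalues i = 9 ∨
      isHermitian.eigenvalues i = 12 := by
  have := isHermitian.isRoot_eigenvalues_of_aeval_eq_zero aeval_eq_zero i
  simp only [IsRoot, eval_mul, eval_sub, eval_X, eval_C, mul_eq_zero, sub_eq_zero] at this
  tauto

theorem sum_eigenvalues : ∑ i, isHermitian.eigenvalues i = 72 := by
  have := isHermitian.trace_eq_sum_eigenvalues
  simp only [RCLike.ofReal_real_eq_id, id_eq] at this
  rw [← this]
  norm_num [trace, apply_self]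

open Finset in
theorem exists_finset_sum_eigenvalues :
    ∃ s : Finset (Fin 9), 1 ≤ #s ∧ #s ≤ 7 ∧ ∑ i ∈ s, isHermitian.eigenvalues i = 45 + 3 * #s := by
  set s := univ.filter fun i => isHermitian.eigenvalues i ≠ 3
  have hsum : ∑ i ∈ s, isHermitian.eigenvalues i = 45 + 3 * #s := by
    have hcompl : ∑ i ∈ sᶜ, isHermitian.eigenvalues i = 3 * (9 - #s) := by
      rw [sum_congr rfl fun i hi => by simpa [s] using hi, sum_const, card_compl, nsmul_eq_mul,
        Nat.cast_sub (card_le_univ s), Fintype.card_fin, Nat.cast_ofNat, mul_comm]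
    linarith [sum_add_sum_compl s isHermitian.eigenvalues, sum_eigenvalues]
  have hge : ∀ i ∈ s, (9 : ℝ) ≤ isHermitian.eigenvalues i := by
    intro i hi
    replace hi : isHermitian.eigenvalues i ≠ 3 := (mem_filter.mp hi).2
    rcases eigenvalues_eq i with h | h | h <;> [exact absurd h hi; exact h.symm.le; linarith]
  have hle : 9 * (#s : ℝ) ≤ 45 + 3 * #s := by
    simpa [hsum, mul_comm] using card_nsmul_le_sum s _ 9 hge
  have hlt : #s < 8 := by exact_mod_cast (by linarith : (#s : ℝ) < 8)
  refine ⟨s, Nat.one_le_iff_ne_zero.mpr fun h => ?_, by omega, hsum⟩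
  rw [card_eq_zero.mp h] at hsum
  simp at hsum

end triangleSignedLaplacian

/-- The Wang–Hou conjecture on signed graphs is false: there exist `n`, an index
`k` with `1 ≤ k ≤ n`, and a real symmetric `n × n` matrix `M` (a signed-graph
Laplacian: off-diagonal entries in `{-1, 0, 1}` and each diagonal entry equal to
the number of nonzero off-diagonal entries in its row) such that some `k`
eigenvalues of `M` (counted with multiplicity) sum to strictly more than
`e + (k+1 choose 2) + 1`, where `e` is half the number of nonzero off-diagonal
entries of `M`. -/
theorem wang_hou_conjecture_false :
    ∃ (n k : ℕ), 1 ≤ k ∧ k ≤ n ∧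
      ∃ (M : Matrix (Fin n) (Fin n) ℝ) (hM : M.IsHermitian),
        (∀ i j, i ≠ j → M i j = -1 ∨ M i j = 0 ∨ M i j = 1) ∧
        (∀ i, M i i = (Nat.card {j : Fin n // j ≠ i ∧ M i j ≠ 0} : ℝ)) ∧
        ∃ s : Finset (Fin n), s.card = k ∧
          (Nat.card {p : Fin n × Fin n // p.1 ≠ p.2 ∧ M p.1 p.2 ≠ 0} : ℝ) / 2
              + ((k + 1).choose 2 : ℝ) + 1
            < ∑ i ∈ s, hM.eigenvalues i := by
  open triangleSignedLaplacian in
  obtain ⟨s, hk1, hk7, hsum⟩ := exists_finset_sum_eigenvalues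
  refine ⟨9, s.card, hk1, hk7.trans (by norm_num), triangleSignedLaplacian ℝ, isHermitian,
    fun i j h => (apply_of_ne h).imp_right Or.inr, fun i => ?_, s, rfl, ?_⟩
  · rw [natCard_ne_zero_offDiag_row (fun _ _ => apply_ne_zero_of_ne), apply_self]
    norm_num
  · rw [natCard_ne_zero_offDiag (fun _ _ => apply_ne_zero_of_ne), hsum, Nat.choose_two_right]
    generalize s.card = k at *
    interval_cases k <;> norm_num
end

section
/- Let L₈ be the real symmetric 8×8 matrix with rows (7,1,1,1,−1,1,1,1), (1,7,1,1,1,−1,−1,1), (1,1,7,1,1,−1,1,−1), (1,1,1,7,1,1,−1,−1), (−1,1,1,1,7,1,1,1), (1,−1,−1,1,1,7,1,1), (1,−1,1,−1,1,1,7,1), (1,1,−1,−1,1,1,1,7). Then the sum of the 5 largest eigenvalues of L₈ (counted with multiplicity) is strictly greater than 44. Equivalently, there exist 5 distinct indices i₁, …, i₅ ∈ {1, …, 8} such that the corresponding eigenvalues of L₈ sum to more than 44. -/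
/-!
`L₈` is annihilated by `(x - 4)(x - 8)(x - 10)(x² - 14x + 36)`, so each eigenvalue is one of
`7 + √13, 10, 8, 4, 7 - √13`. The traces of `L₈` and `L₈²` (56 and 448) give two linear
equations on the five multiplicities; since `√13` is irrational, `7 ± √13` have equal
multiplicity, and then the multiplicities are forced to be `1, 1, 3, 2, 1`. The five largest
eigenvalues therefore sum to `41 + √13 > 44`.
-/

open Matrix Polynomial Finset

theorem Fintype.sum_comp_eq_sum_card_fiber_nsmul {ι κ M : Type*} [Fintype ι] [Fintype κ]
    [DecidableEq κ] [AddCommMonoid M] (k : ι → κ) (g : κ → M) :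
    ∑ i, g (k i) = ∑ j, #{i | k i = j} • g j := by
  rw [← Finset.sum_fiberwise' univ k g]
  simp only [sum_const]

namespace Matrix.IsHermitian

variable {𝕜 n : Type*} [RCLike 𝕜] [Fintype n] [DecidableEq n] {A : Matrix n n 𝕜}

theorem eval_eigenvalues_eq_zero (hA : A.IsHermitian) {p : ℝ[X]} (hp : aeval A p = 0)
    (i : n) : p.eval (hA.eigenvalues i) = 0 := by
  have : Nonempty n := ⟨i⟩
  simpa [hp] using
    spectrum.subset_polynomial_aeval A p ⟨_, hA.eigenvalues_mem_spectrum_real i, rfl⟩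

theorem trace_pow_eq_sum_eigenvalues_pow (hA : A.IsHermitian) (k : ℕ) :
    (A ^ k).trace = ∑ i, (hA.eigenvalues i : 𝕜) ^ k := by
  conv_lhs => rw [hA.spectral_theorem]
  rw [← map_pow, Unitary.conjStarAlgAut_apply, trace_mul_cycle, Unitary.coe_star_mul_self,
    one_mul, diagonal_pow, trace_diagonal]
  rfl

end Matrix.IsHermitian

def L₈ (R : Type*) [Ring R] : Matrix (Fin 8) (Fin 8) R :=
  !![7, 1, 1, 1, -1, 1, 1, 1;
     1, 7, 1, 1, 1, -1, -1, 1;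
     1, 1, 7, 1, 1, -1, 1, -1;
     1, 1, 1, 7, 1, 1, -1, -1;
     -1, 1, 1, 1, 7, 1, 1, 1;
     1, -1, -1, 1, 1, 7, 1, 1;
     1, -1, 1, -1, 1, 1, 7, 1;
     1, 1, -1, -1, 1, 1, 1, 7]

section Computations

variable {R : Type*} [Ring R]

theorem mapMatrix_L₈ : (Int.castRingHom R).mapMatrix (L₈ ℤ) = L₈ R := by
  ext i j
  fin_cases i <;> fin_cases j <;> simp [L₈]

theorem L₈_annihilated :
    (L₈ R - 4) * (L₈ R - 8) * (L₈ R - 10) * (L₈ R ^ 2 - 14 * L₈ R + 36) = 0 := by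
  have h : (L₈ ℤ - 4) * (L₈ ℤ - 8) * (L₈ ℤ - 10) * (L₈ ℤ ^ 2 - 14 * L₈ ℤ + 36) = 0 := by
    decide
  simpa only [map_mul, map_sub, map_add, map_pow, map_ofNat, map_zero, mapMatrix_L₈]
    using congrArg (Int.castRingHom R).mapMatrix h

theorem trace_L₈ : (L₈ R).trace = 56 := by
  rw [← mapMatrix_L₈, RingHom.mapMatrix_apply, ← AddMonoidHom.map_trace,
    show (L₈ ℤ).trace = 56 by decide]
  simp

theorem trace_L₈_sq : (L₈ R ^ 2).trace = 448 := by
  rw [← mapMatrix_L₈, ← map_pow, RingHom.mapMatrix_apply, ← AddMonoidHom.map_trace,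
    show (L₈ ℤ ^ 2).trace = 448 by decide]
  simp

end Computations

/-- The distinct eigenvalues of `L₈`, in decreasing order. -/
noncomputable def spectrumL₈ : Fin 5 → ℝ := ![7 + √13, 10, 8, 4, 7 - √13]

theorem exists_eq_spectrumL₈ {x : ℝ}
    (hx : (x - 4) * (x - 8) * (x - 10) * (x ^ 2 - 14 * x + 36) = 0) :
    ∃ j, x = spectrumL₈ j := by
  have hr : √13 ^ 2 = 13 := Real.sq_sqrt (by norm_num)
  have hprod : ∏ j, (x - spectrumL₈ j) = 0 := by
    simp only [Fin.prod_univ_five, spectrumL₈, Matrix.cons_val]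
    linear_combination hx - (x - 4) * (x - 8) * (x - 10) * hr
  obtain ⟨j, -, hj⟩ := prod_eq_zero_iff.1 hprod
  exact ⟨j, sub_eq_zero.1 hj⟩

theorem exists_eigenvalues_eq_spectrumL₈ (hA : (L₈ ℝ).IsHermitian) (i : Fin 8) :
    ∃ j, hA.eigenvalues i = spectrumL₈ j := by
  apply exists_eq_spectrumL₈
  have := hA.eval_eigenvalues_eq_zero
    (p := (X - 4) * (X - 8) * (X - 10) * (X ^ 2 - 14 * X + 36)) ?_ i
  · simpa only [eval_mul, eval_sub, eval_add, eval_pow, eval_X, eval_ofNat] using this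
  · simpa only [map_mul, map_sub, map_add, map_pow, aeval_X, map_ofNat] using L₈_annihilated

theorem card_fiber_eq_of_moments {ι : Type*} [Fintype ι] (k : ι → Fin 5)
    (h0 : Fintype.card ι = 8) (h1 : ∑ i, spectrumL₈ (k i) = 56)
    (h2 : ∑ i, spectrumL₈ (k i) ^ 2 = 448) :
    (fun j ↦ #{i | k i = j}) = ![1, 1, 3, 2, 1] := by
  set n : Fin 5 → ℕ := fun j ↦ #{i | k i = j}
  have hr : √13 ^ 2 = 13 := Real.sq_sqrt (by norm_num)
  have e0 : n 0 + n 1 + n 2 + n 3 + n 4 = 8 := by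
    simpa [Fin.sum_univ_five, h0] using
      (Fintype.sum_comp_eq_sum_card_fiber_nsmul k fun _ ↦ (1 : ℕ)).symm
  have e1 := (Fintype.sum_comp_eq_sum_card_fiber_nsmul k spectrumL₈).symm.trans h1
  have e2 := (Fintype.sum_comp_eq_sum_card_fiber_nsmul k (spectrumL₈ · ^ 2)).symm.trans h2
  simp only [Fin.sum_univ_five, spectrumL₈, Matrix.cons_val, nsmul_eq_mul] at e1 e2
  have e04 : n 0 = n 4 := by
    by_contra hne
    have hirr : Irrational (((n 0 : ℤ) - n 4 : ℤ) * √13) :=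
      (Nat.Prime.irrational_sqrt (p := 13) (by norm_num)).intCast_mul (by omega)
    refine hirr.ne_int (56 - 7 * n 0 - 10 * n 1 - 8 * n 2 - 4 * n 3 - 7 * n 4) ?_
    push_cast
    linear_combination e1
  have e04' : (n 0 : ℝ) = n 4 := by exact_mod_cast e04
  have e1' : 7 * n 0 + 10 * n 1 + 8 * n 2 + 4 * n 3 + 7 * n 4 = 56 := by
    exact_mod_cast (by linear_combination e1 - √13 * e04' :
      7 * (n 0 : ℝ) + 10 * n 1 + 8 * n 2 + 4 * n 3 + 7 * n 4 = 56)
  have e2' : 62 * n 0 + 100 * n 1 + 64 * n 2 + 16 * n 3 + 62 * n 4 = 448 := by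
    exact_mod_cast (by linear_combination e2 - 14 * √13 * e04' - (n 0 + n 4 : ℝ) * hr :
      62 * (n 0 : ℝ) + 100 * n 1 + 64 * n 2 + 16 * n 3 + 62 * n 4 = 448)
  funext j
  fin_cases j <;> simp <;> omega

theorem exists_card_eq_five_lt_sum {ι : Type*} [Fintype ι] (k : ι → Fin 5)
    (hn : (fun j ↦ #{i | k i = j}) = ![1, 1, 3, 2, 1]) :
    ∃ s : Finset ι, #s = 5 ∧ 44 < ∑ i ∈ s, spectrumL₈ (k i) := by
  have hfiber {M : Type} [AddCommMonoid M] (g : Fin 5 → M) :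
      ∑ i, g (k i) = ∑ j, (![1, 1, 3, 2, 1] j : ℕ) • g j := by
    rw [Fintype.sum_comp_eq_sum_card_fiber_nsmul, ← hn]
  have hcard := hfiber fun j ↦ if j < 3 then (1 : ℕ) else 0
  have hsum := hfiber fun j ↦ if j < 3 then spectrumL₈ j else 0
  refine ⟨({i | k i < 3} : Finset ι), ?_, ?_⟩
  · rw [card_filter, hcard]
    simp [Fin.sum_univ_five]
  · have h3 : (3 : ℝ) < √13 := by
      rw [Real.lt_sqrt (by norm_num)]
      norm_num
    rw [sum_filter, hsum]
    simp [Fin.sum_univ_five, spectrumL₈]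
    linarith

/-- For the signed Laplacian `L₈` of a signing of `K₈`, the sum of the 5 largest
eigenvalues exceeds `44 = e(K₈) + (6 choose 2) + 1`: equivalently, some 5
eigenvalues (with multiplicity, i.e. 5 distinct indices) sum to more than 44. -/
theorem sum_five_largest_eigenvalues_L8_gt_44
    (hL : (!![7, 1, 1, 1, -1, 1, 1, 1;
              1, 7, 1, 1, 1, -1, -1, 1;
              1, 1, 7, 1, 1, -1, 1, -1;
              1, 1, 1, 7, 1, 1, -1, -1;
              -1, 1, 1, 1, 7, 1, 1, 1;
              1, -1, -1, 1, 1, 7, 1, 1;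
              1, -1, 1, -1, 1, 1, 7, 1;
              1, 1, -1, -1, 1, 1, 1, 7] : Matrix (Fin 8) (Fin 8) ℝ).IsHermitian) :
    ∃ s : Finset (Fin 8), s.card = 5 ∧ 44 < ∑ i ∈ s, hL.eigenvalues i := by
  -- restated so that `hk` is about the eigenvalues of the literal matrix of `hL`, not of `L₈ ℝ`
  have hspec : ∀ i, ∃ j, hL.eigenvalues i = spectrumL₈ j :=
    exists_eigenvalues_eq_spectrumL₈ hL
  choose k hk using hspec
  have h1 : ∑ i, spectrumL₈ (k i) = 56 := by
    simpa [hk] using hL.trace_eq_sum_eigenvalues.symm.trans trace_L₈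
  have h2 : ∑ i, spectrumL₈ (k i) ^ 2 = 448 := by
    simpa [hk] using (hL.trace_pow_eq_sum_eigenvalues_pow 2).symm.trans trace_L₈_sq
  have hmult := card_fiber_eq_of_moments k (by simp) h1 h2
  obtain ⟨s, hs, hsum⟩ := exists_card_eq_five_lt_sum k hmult
  exact ⟨s, hs, by simpa [hk] using hsum⟩
end
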